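/- arXiv:1407.1347 — 2 statements merged into one kernel-verified Lean document; each statement's English description precedes it below -/
import Mathlib

section
/- For real ν with 0 < ν < 1 and integer m, ∫₀^π (sin x)^{ν-1} cos(2mx) dx = π cos(mπ)/(2^{ν-1} ν B(½(ν+1)+m, ½(ν+1)-m)). -/
open Real

noncomputable def betaFn (a b : ℝ) : ℝ := Real.Gamma a * Real.Gamma b / Real.Gamma (a + b)

open MeasureTheory intervalIntegral Set

lemma meas_aux (c : ℝ) (k : ℝ → ℝ) (hk : Measurable k) :
    Measurable fun x => Real.sin x ^ c * k x := by measurability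

lemma intInt_half (ν : ℝ) (h0 : 0 < ν) (h1 : ν ≤ 1) :
    IntervalIntegrable (fun x => Real.sin x ^ (ν - 1)) volume 0 (π/2) := by
  have hb : IntervalIntegrable (fun x : ℝ => (2/π)^(ν-1) * x ^ (ν - 1)) volume 0 (π/2) :=
    (intervalIntegrable_rpow' (by linarith)).const_mul _
  refine hb.mono_fun ?_ ?_
  · exact ((by measurability : Measurable fun x => Real.sin x ^ (ν-1)).aestronglyMeasurable).restrict
  · rw [Filter.EventuallyLE, ae_restrict_iff' measurableSet_uIoc]
    filter_upwards with x hx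
    rw [Set.uIoc_of_le (by positivity)] at hx
    obtain ⟨hx0, hx2⟩ := hx
    have hsx : 0 < Real.sin x := Real.sin_pos_of_pos_of_lt_pi hx0 (lt_of_le_of_lt hx2 (by linarith [pi_pos]))
    rw [Real.norm_eq_abs, Real.norm_eq_abs, abs_of_nonneg (Real.rpow_nonneg hsx.le _),
      abs_of_nonneg (by positivity)]
    rw [← Real.mul_rpow (by positivity) hx0.le]
    exact Real.rpow_le_rpow_of_nonpos (by positivity) (Real.mul_le_sin hx0.le hx2) (by linarith)

lemma intInt_sin_rpow (ν : ℝ) (h0 : 0 < ν) (h1 : ν ≤ 1) :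
    IntervalIntegrable (fun x => Real.sin x ^ (ν - 1)) volume 0 π := by
  apply (intInt_half ν h0 h1).trans
  have h2 := ((intInt_half ν h0 h1).comp_sub_left π)
  simp only [Real.sin_pi_sub] at h2
  have h3 : π - π/2 = π/2 := by ring
  rw [h3, sub_zero] at h2
  exact h2.symm

lemma intInt_sin_rpow_mul (ν : ℝ) (h0 : 0 < ν) (h1 : ν ≤ 1) (k : ℝ → ℝ) (hk : Measurable k)
    (C : ℝ) (hbd : ∀ x, |k x| ≤ C) :
    IntervalIntegrable (fun x => Real.sin x ^ (ν - 1) * k x) volume 0 π := by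
  refine ((intInt_sin_rpow ν h0 h1).const_mul C).mono_fun
    ((meas_aux _ _ hk).aestronglyMeasurable).restrict ?_
  filter_upwards with x
  rw [Real.norm_eq_abs, Real.norm_eq_abs, abs_mul, abs_mul]
  calc |Real.sin x ^ (ν-1)| * |k x| ≤ |Real.sin x ^ (ν-1)| * C :=
        mul_le_mul_of_nonneg_left (hbd x) (abs_nonneg _)
    _ ≤ |C| * |Real.sin x ^ (ν-1)| := by
        rw [mul_comm]; exact mul_le_mul_of_nonneg_right (le_abs_self C) (abs_nonneg _)

lemma realBeta (a b : ℝ) (ha : 0 < a) (hb : 0 < b) :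
    ∫ t in (0:ℝ)..1, t ^ (a-1) * (1-t) ^ (b-1) = betaFn a b := by
  have key : Complex.Gamma a * Complex.Gamma b
      = Complex.Gamma (a + b) * Complex.betaIntegral a b :=
    Complex.Gamma_mul_Gamma_eq_betaIntegral (by simpa using ha) (by simpa using hb)
  have hofreal : ((∫ t in (0:ℝ)..1, t ^ (a-1) * (1-t) ^ (b-1) : ℝ) : ℂ)
      = Complex.betaIntegral a b := by
    rw [← intervalIntegral.integral_ofReal]
    unfold Complex.betaIntegral
    apply intervalIntegral.integral_congr
    intro t ht
    rw [Set.uIcc_of_le (by norm_num : (0:ℝ) ≤ 1)] at ht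
    push_cast
    rw [Complex.ofReal_cpow ht.1, Complex.ofReal_cpow (by linarith [ht.2])]
    push_cast
    ring
  have hG : Complex.Gamma (a+b) = (Real.Gamma (a+b) : ℂ) := by
    rw [← Complex.ofReal_add, Complex.Gamma_ofReal]
  have hGa : Complex.Gamma a = (Real.Gamma a : ℂ) := Complex.Gamma_ofReal a
  have hGb : Complex.Gamma b = (Real.Gamma b : ℂ) := Complex.Gamma_ofReal b
  have hne : Real.Gamma (a+b) ≠ 0 := (Real.Gamma_pos_of_pos (by linarith)).ne'
  rw [← hofreal, hG, hGa, hGb] at key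
  have : Real.Gamma a * Real.Gamma b
      = Real.Gamma (a+b) * ∫ t in (0:ℝ)..1, t ^ (a-1) * (1-t) ^ (b-1) := by
    exact_mod_cast key
  unfold betaFn
  field_simp
  linarith [this]

lemma base_int (ν : ℝ) (h0 : 0 < ν) :
    ∫ x in (0:ℝ)..π, Real.sin x ^ (ν-1) = 2^(ν-1) * betaFn (ν/2) (ν/2) := by
  set φ : ℝ → ℝ := fun x => (1 - Real.cos x)/2 with hφ
  set g : ℝ → ℝ := fun t => t ^ (ν/2-1) * (1-t) ^ (ν/2-1) with hg
  have hmono : StrictMonoOn φ (Icc 0 π) := by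
    intro x hx y hy hxy
    have := Real.strictAntiOn_cos hx hy hxy
    simp only [hφ]
    linarith
  have hφ0 : φ 0 = 0 := by simp [hφ]
  have hφπ : φ π = 1 := by simp [hφ]
  have hcont : ContinuousOn φ (Icc 0 π) := (by continuity : Continuous φ).continuousOn
  have himg : φ '' Ioo 0 π = Ioo 0 1 := by
    apply Subset.antisymm
    · rintro _ ⟨x, hx, rfl⟩
      exact ⟨by rw [← hφ0]; exact hmono (by simp [pi_pos.le]) ⟨hx.1.le, hx.2.le⟩ hx.1,
             by rw [← hφπ]; exact hmono ⟨hx.1.le, hx.2.le⟩ (by simp [pi_pos.le]) hx.2⟩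
    · have := intermediate_value_Ioo (le_of_lt pi_pos) hcont
      rw [hφ0, hφπ] at this
      exact this
  have hderiv : ∀ x ∈ Ioo 0 π, HasDerivWithinAt φ (Real.sin x / 2) (Ioo 0 π) x := by
    intro x _
    exact (((Real.hasDerivAt_cos x).const_sub 1).div_const 2).hasDerivWithinAt.congr_deriv (by ring)
  have hinj : InjOn φ (Ioo 0 π) := (hmono.injOn).mono Ioo_subset_Icc_self
  have key := integral_image_eq_integral_abs_deriv_smul measurableSet_Ioo hderiv hinj g
  rw [himg] at key
  have hptwise : ∀ x ∈ Ioo (0:ℝ) π,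
      |Real.sin x / 2| • g (φ x) = 2^(1-ν) * Real.sin x ^ (ν-1) := by
    intro x hx
    have hs : 0 < Real.sin x := Real.sin_pos_of_pos_of_lt_pi hx.1 hx.2
    have hφx : φ x ∈ Ioo (0:ℝ) 1 := himg ▸ mem_image_of_mem φ hx
    have h1φ : φ x * (1 - φ x) = (Real.sin x / 2)^2 := by
      have := Real.sin_sq_add_cos_sq x
      simp only [hφ]; nlinarith
    have : g (φ x) = (Real.sin x / 2) ^ (ν - 2) := by
      rw [hg]
      simp only
      rw [← Real.mul_rpow hφx.1.le (by linarith [hφx.2]), h1φ,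
        ← Real.rpow_natCast (Real.sin x / 2) 2, ← Real.rpow_mul (by positivity)]
      norm_num
      ring_nf
    rw [this, smul_eq_mul, abs_of_nonneg (by positivity)]
    rw [show Real.sin x / 2 * (Real.sin x / 2) ^ (ν-2) = (Real.sin x/2)^(ν-2+1) by
      rw [Real.rpow_add_one (by positivity)]; ring]
    rw [show ν - 2 + 1 = ν - 1 by ring, Real.div_rpow hs.le (by norm_num)]
    have h2 : (2:ℝ)^(1-ν) * (2:ℝ)^(ν-1) = 1 := by
      rw [← Real.rpow_add (by norm_num : (0:ℝ) < 2)]; norm_num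
    rw [div_eq_iff (ne_of_gt (Real.rpow_pos_of_pos (by norm_num) _))]
    linear_combination (-(Real.sin x ^ (ν-1))) * h2
  rw [MeasureTheory.setIntegral_congr_fun measurableSet_Ioo hptwise] at key
  rw [MeasureTheory.integral_const_mul] at key
  have hL : ∫ t in Ioo (0:ℝ) 1, g t = betaFn (ν/2) (ν/2) := by
    rw [← MeasureTheory.integral_Ioc_eq_integral_Ioo, ← intervalIntegral.integral_of_le (by norm_num)]
    exact realBeta _ _ (by linarith) (by linarith)
  have hR : ∫ x in Ioo (0:ℝ) π, Real.sin x ^ (ν-1) = ∫ x in (0:ℝ)..π, Real.sin x ^ (ν-1) := by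
    rw [← MeasureTheory.integral_Ioc_eq_integral_Ioo, ← intervalIntegral.integral_of_le pi_pos.le]
  rw [hL, hR] at key
  have h2 : (2:ℝ)^(ν-1) * (2:ℝ)^(1-ν) = 1 := by
    rw [← Real.rpow_add (by norm_num : (0:ℝ) < 2)]; norm_num
  rw [key]
  linear_combination (-(∫ x in (0:ℝ)..π, Real.sin x ^ (ν-1))) * h2

lemma recurrence (ν a : ℝ) (h0 : 0 < ν) (h1 : ν ≤ 1) :
    (ν + a) * (∫ x in (0:ℝ)..π, Real.sin x ^ (ν-1) * Real.cos ((a+1)*x))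
      = -(ν - a) * (∫ x in (0:ℝ)..π, Real.sin x ^ (ν-1) * Real.cos ((a-1)*x)) := by
  set F : ℝ → ℝ := fun x => Real.sin x ^ ν * Real.cos (a*x) with hF
  set F' : ℝ → ℝ := fun x => Real.sin x ^ (ν-1) *
      ((ν+a)/2 * Real.cos ((a+1)*x) + (ν-a)/2 * Real.cos ((a-1)*x)) with hF'
  have hcont : ContinuousOn F (Icc 0 π) := by
    apply Continuous.continuousOn
    exact (Real.continuous_sin.rpow_const (fun x => Or.inr h0.le)).mul
      (Real.continuous_cos.comp (continuous_const.mul continuous_id))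
  have hderiv : ∀ x ∈ Ioo (0:ℝ) π, HasDerivWithinAt F (F' x) (Ioi x) x := by
    intro x hx
    have hs : 0 < Real.sin x := Real.sin_pos_of_pos_of_lt_pi hx.1 hx.2
    have h1 : HasDerivAt (fun y => Real.sin y ^ ν) (Real.cos x * ν * Real.sin x ^ (ν-1)) x :=
      (Real.hasDerivAt_sin x).rpow_const (Or.inl hs.ne')
    have h2 : HasDerivAt (fun y => Real.cos (a*y)) (-Real.sin (a*x) * a) x := by
      simpa [Function.comp_def] using (Real.hasDerivAt_cos (a*x)).comp x ((hasDerivAt_id x).const_mul a)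
    have h3 := h1.mul h2
    refine (h3.congr_deriv ?_).hasDerivWithinAt
    have hpow : Real.sin x ^ ν = Real.sin x ^ (ν-1) * Real.sin x := by
      rw [← Real.rpow_add_one hs.ne' (ν-1)]; ring_nf
    rw [hF']
    simp only
    rw [hpow, show (a+1)*x = a*x + x by ring, show (a-1)*x = a*x - x by ring,
      Real.cos_add, Real.cos_sub]
    ring
  have hmcos : ∀ c : ℝ, Measurable fun x => Real.cos (c*x) :=
    fun c => Real.measurable_cos.comp (measurable_const_mul c)
  have hi1 : IntervalIntegrable (fun x => Real.sin x ^ (ν-1) * Real.cos ((a+1)*x)) volume 0 π :=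
    intInt_sin_rpow_mul ν h0 h1 _ (hmcos (a+1)) 1 (fun x => Real.abs_cos_le_one _)
  have hi2 : IntervalIntegrable (fun x => Real.sin x ^ (ν-1) * Real.cos ((a-1)*x)) volume 0 π :=
    intInt_sin_rpow_mul ν h0 h1 _ (hmcos (a-1)) 1 (fun x => Real.abs_cos_le_one _)
  have hint : IntervalIntegrable F' volume 0 π := by
    apply intInt_sin_rpow_mul ν h0 h1 _ (((hmcos (a+1)).const_mul _).add ((hmcos (a-1)).const_mul _)) (|(ν+a)/2| + |(ν-a)/2|)
    intro x
    calc |(ν+a)/2 * Real.cos ((a+1)*x) + (ν-a)/2 * Real.cos ((a-1)*x)|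
        ≤ |(ν+a)/2 * Real.cos ((a+1)*x)| + |(ν-a)/2 * Real.cos ((a-1)*x)| := abs_add_le _ _
      _ ≤ |(ν+a)/2| + |(ν-a)/2| := by
          rw [abs_mul, abs_mul]
          gcongr
          · exact mul_le_of_le_one_right (abs_nonneg _) (Real.abs_cos_le_one _)
          · exact mul_le_of_le_one_right (abs_nonneg _) (Real.abs_cos_le_one _)
  have hftc := intervalIntegral.integral_eq_sub_of_hasDeriv_right_of_le pi_pos.le hcont hderiv hint
  have hF0 : F 0 = 0 := by simp [hF, Real.zero_rpow h0.ne']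
  have hFπ : F π = 0 := by simp [hF, Real.zero_rpow h0.ne']
  rw [hF0, hFπ, sub_zero] at hftc
  have hsplit : ∫ x in (0:ℝ)..π, F' x
      = (ν+a)/2 * (∫ x in (0:ℝ)..π, Real.sin x ^ (ν-1) * Real.cos ((a+1)*x))
        + (ν-a)/2 * (∫ x in (0:ℝ)..π, Real.sin x ^ (ν-1) * Real.cos ((a-1)*x)) := by
    calc ∫ x in (0:ℝ)..π, F' x
        = ∫ x in (0:ℝ)..π, ((ν+a)/2 * (Real.sin x ^ (ν-1) * Real.cos ((a+1)*x))
            + (ν-a)/2 * (Real.sin x ^ (ν-1) * Real.cos ((a-1)*x))) := by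
          apply intervalIntegral.integral_congr
          intro x _
          simp only [hF']
          ring
      _ = (∫ x in (0:ℝ)..π, (ν+a)/2 * (Real.sin x ^ (ν-1) * Real.cos ((a+1)*x)))
            + ∫ x in (0:ℝ)..π, (ν-a)/2 * (Real.sin x ^ (ν-1) * Real.cos ((a-1)*x)) :=
          intervalIntegral.integral_add (hi1.const_mul _) (hi2.const_mul _)
      _ = (ν+a)/2 * (∫ x in (0:ℝ)..π, Real.sin x ^ (ν-1) * Real.cos ((a+1)*x))
            + (ν-a)/2 * (∫ x in (0:ℝ)..π, Real.sin x ^ (ν-1) * Real.cos ((a-1)*x)) := by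
          rw [intervalIntegral.integral_const_mul, intervalIntegral.integral_const_mul]
  rw [hsplit] at hftc
  linarith

lemma Gamma_z_ne (ν : ℝ) (h0 : 0 < ν) (h1 : ν < 1) (k : ℤ) :
    Real.Gamma ((ν+1)/2 + (k:ℝ)) ≠ 0 := by
  apply Real.Gamma_ne_zero
  intro n hn
  have hj : ((-(n:ℤ) - k : ℤ) : ℝ) = (ν+1)/2 := by push_cast; linarith
  have hj1 : (0:ℝ) < ((-(n:ℤ) - k : ℤ) : ℝ) := by rw [hj]; linarith
  have hj2 : ((-(n:ℤ) - k : ℤ) : ℝ) < 1 := by rw [hj]; linarith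
  have h1' : (1:ℤ) ≤ -(n:ℤ) - k := by exact_mod_cast hj1
  have : (1:ℝ) ≤ ((-(n:ℤ) - k : ℤ) : ℝ) := by exact_mod_cast h1'
  linarith

lemma base_rhs (ν : ℝ) (h0 : 0 < ν) (h1 : ν < 1) :
    2^(ν-1) * betaFn (ν/2) (ν/2)
      = π / (2^(ν-1) * ν * betaFn ((ν+1)/2) ((ν+1)/2)) := by
  have hdup : Real.Gamma (ν/2) * Real.Gamma ((ν+1)/2) = Real.Gamma ν * (2:ℝ)^(1-ν) * √π := by
    have := Real.Gamma_mul_Gamma_add_half (ν/2)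
    rw [show ν/2 + 1/2 = (ν+1)/2 by ring, show 2 * (ν/2) = ν by ring] at this
    exact this
  have hGν : 0 < Real.Gamma ν := Real.Gamma_pos_of_pos h0
  have hGh : 0 < Real.Gamma (ν/2) := Real.Gamma_pos_of_pos (by linarith)
  have hGz : 0 < Real.Gamma ((ν+1)/2) := Real.Gamma_pos_of_pos (by linarith)
  have hGν1 : Real.Gamma (ν+1) = ν * Real.Gamma ν := Real.Gamma_add_one h0.ne'
  have h2 : (0:ℝ) < 2^(ν-1) := Real.rpow_pos_of_pos (by norm_num) _
  have h2' : (0:ℝ) < 2^(1-ν) := Real.rpow_pos_of_pos (by norm_num) _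
  have h22 : (2:ℝ)^(ν-1) * (2:ℝ)^(1-ν) = 1 := by
    rw [← Real.rpow_add (by norm_num : (0:ℝ) < 2)]; norm_num
  have hsq : √π * √π = π := Real.mul_self_sqrt pi_pos.le
  unfold betaFn
  rw [show ν/2 + ν/2 = ν by ring, show (ν+1)/2 + (ν+1)/2 = ν+1 by ring, hGν1]
  field_simp
  linear_combination (((2:ℝ)^(ν-1))^2 * (Real.Gamma (ν/2) * Real.Gamma ((ν+1)/2)
      + Real.Gamma ν * (2:ℝ)^(1-ν) * √π)) * hdup
    + ((Real.Gamma ν)^2 * √π * √π * ((2:ℝ)^(ν-1) * (2:ℝ)^(1-ν) + 1)) * h22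
    + ((Real.Gamma ν)^2) * hsq

lemma main_nat (ν : ℝ) (h0 : 0 < ν) (h1 : ν < 1) (n : ℕ) :
    ∫ x in (0:ℝ)..π, Real.sin x ^ (ν - 1) * Real.cos (2 * (n : ℝ) * x)
      = π * Real.cos ((n : ℝ) * π) /
          (2 ^ (ν - 1) * ν * betaFn ((ν + 1)/2 + (n : ℝ)) ((ν + 1)/2 - (n : ℝ))) := by
  induction n with
  | zero =>
    simp only [Nat.cast_zero, mul_zero, zero_mul, Real.cos_zero, mul_one, add_zero, sub_zero]
    rw [base_int ν h0, base_rhs ν h0 h1]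
  | succ n ih =>
    set c : ℝ := (n : ℝ) with hc
    have hcast : ((n+1 : ℕ) : ℝ) = c + 1 := by push_cast; ring
    rw [hcast]
    have hcnn : 0 ≤ c := Nat.cast_nonneg n
    set z : ℝ := (ν+1)/2 with hz
    have hz1 : 1/2 < z := by rw [hz]; linarith
    have hz2 : z < 1 := by rw [hz]; linarith
    -- recurrence
    have hrec := recurrence ν (2*c+1) h0 h1.le
    rw [show 2*c+1+1 = 2*(c+1) by ring, show 2*c+1-1 = 2*c by ring] at hrec
    -- Gamma facts
    have hgzc : Real.Gamma (z + c) ≠ 0 := by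
      have := Gamma_z_ne ν h0 h1 n
      rwa [show ((n:ℤ):ℝ) = c by push_cast; ring] at this
    have hgzmc : Real.Gamma (z - c) ≠ 0 := by
      have := Gamma_z_ne ν h0 h1 (-(n:ℤ))
      rwa [show ((-(n:ℤ):ℤ):ℝ) = -c by push_cast; ring, ← sub_eq_add_neg] at this
    have hgzmc1 : Real.Gamma (z - (c+1)) ≠ 0 := by
      have := Gamma_z_ne ν h0 h1 (-(n:ℤ)-1)
      rwa [show ((-(n:ℤ)-1:ℤ):ℝ) = -(c+1) by push_cast; ring, ← sub_eq_add_neg] at this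
    have hgs : Real.Gamma (ν+1) ≠ 0 := (Real.Gamma_pos_of_pos (by linarith)).ne'
    have hzc : z + c ≠ 0 := by positivity
    have hzc1 : z - (c+1) ≠ 0 := by
      intro h
      have : z = c + 1 := by linarith
      linarith
    have hG1 : Real.Gamma (z + (c+1)) = (z+c) * Real.Gamma (z+c) := by
      rw [show z + (c+1) = (z+c) + 1 by ring]
      exact Real.Gamma_add_one hzc
    have hG2 : Real.Gamma (z - c) = (z-(c+1)) * Real.Gamma (z-(c+1)) := by
      have := Real.Gamma_add_one hzc1
      rw [show z-(c+1)+1 = z-c by ring] at this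
      exact this
    have h2p : ((2:ℝ)^(ν-1)) ≠ 0 := (Real.rpow_pos_of_pos (by norm_num) _).ne'
    have hν2c : ν + (2*c+1) ≠ 0 := by positivity
    -- combine
    rw [ih] at hrec
    unfold betaFn at hrec ⊢
    rw [show (z + (c+1)) + (z - (c+1)) = ν+1 by rw [hz]; ring] 
    rw [show (z + c) + (z - c) = ν+1 by rw [hz]; ring] at hrec
    rw [show (c+1)*π = c*π + π by ring, Real.cos_add_pi]
    rw [hG1]
    rw [hG2] at hrec
    apply mul_left_cancel₀ hν2c
    rw [hrec]
    have hπ : (0:ℝ) < π := pi_pos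
    field_simp
    ring

theorem sin_pow_cos_integral (ν : ℝ) (h0 : 0 < ν) (h1 : ν < 1) (m : ℤ) :
    ∫ x in (0:ℝ)..π, (Real.sin x) ^ (ν - 1) * Real.cos (2 * (m : ℝ) * x)
      = π * Real.cos ((m : ℝ) * π) /
          ((2:ℝ) ^ (ν - 1) * ν * betaFn ((ν + 1)/2 + (m : ℝ)) ((ν + 1)/2 - (m : ℝ))) := by
  rcases le_or_gt 0 m with hm | hm
  · obtain ⟨n, rfl⟩ := Int.eq_ofNat_of_zero_le hm
    have := main_nat ν h0 h1 n
    rwa [show (((n:ℤ)):ℝ) = (n:ℝ) by push_cast; ring]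
  · obtain ⟨n, rfl⟩ : ∃ n : ℕ, m = -(n:ℤ) := ⟨m.natAbs, by omega⟩
    have key := main_nat ν h0 h1 n
    have hcast : ((-(n:ℤ):ℤ):ℝ) = -(n:ℝ) := by push_cast; ring
    rw [hcast]
    have hL : ∫ x in (0:ℝ)..π, Real.sin x ^ (ν - 1) * Real.cos (2 * (-(n:ℝ)) * x)
        = ∫ x in (0:ℝ)..π, Real.sin x ^ (ν - 1) * Real.cos (2 * (n:ℝ) * x) := by
      apply intervalIntegral.integral_congr
      intro x _
      simp only
      rw [show 2 * (-(n:ℝ)) * x = -(2 * (n:ℝ) * x) by ring, Real.cos_neg]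
    have hcos : Real.cos (-(n:ℝ) * π) = Real.cos ((n:ℝ) * π) := by
      rw [show -(n:ℝ) * π = -((n:ℝ) * π) by ring, Real.cos_neg]
    have hbeta : betaFn ((ν + 1)/2 + -(n:ℝ)) ((ν + 1)/2 - -(n:ℝ))
        = betaFn ((ν + 1)/2 + (n:ℝ)) ((ν + 1)/2 - (n:ℝ)) := by
      unfold betaFn
      rw [show (ν+1)/2 + -(n:ℝ) = (ν+1)/2 - (n:ℝ) by ring,
        show (ν+1)/2 - -(n:ℝ) = (ν+1)/2 + (n:ℝ) by ring,
        show (ν+1)/2 - (n:ℝ) + ((ν+1)/2 + (n:ℝ)) = (ν+1)/2 + (n:ℝ) + ((ν+1)/2 - (n:ℝ)) by ring,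
        mul_comm (Real.Gamma ((ν+1)/2 - (n:ℝ)))]
    rw [hL, hcos, hbeta]
    exact key
end

section
/- Let the MM be ARFIMA(p,d,0) applied to an ARFIMA(0,d₀,q₀) TDGP, so that C(z) = θ₀(z)φ(z) is a polynomial of degree q̄ = q₀ + p with coefficients c_j = Σ_r θ_{(j-r)0} φ_r. Then the limiting criterion factor K(η) = Σ_{j=0}^{q̄} c_j² + 2 Σ_{0≤k<j≤q̄} c_j c_k ρ(j-k) is an exact finite expression (no truncation error), where ρ(h) = Π_{i=1}^h (δ+i-1)/(i-δ) and δ = d₀ - d. -/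
/-!
Expanding `|C(e^{ix})|² = ∑_{j,k} c_j c_k cos((j - k) x)` reduces the claim to the moments
`I_h = ∫₀^π cos(h x) (2 sin(x/2))^{-2δ} dx`. Differentiating
`(2 sin(x/2))^{1-2δ} cos((h + 1/2) x)`, which vanishes at `0` and `π`, gives
`(h + 1 - δ) I_{h+1} = (h + δ) I_h`, hence `I_h = I_0 ρ(h)`. The substitution `t = sin²(x/2)`
turns `I_0` into `2^{-2δ} B(1/2 - δ, 1/2)`, which the duplication formula evaluates to
`π Γ(1 - 2δ) / Γ(1 - δ)²`.
-/

open Real MeasureTheory Set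

noncomputable def fracDiffWeight (δ x : ℝ) : ℝ := (2 * sin (x / 2)) ^ (-(2 * δ))

noncomputable def fracDiffAutocorr (δ : ℝ) (h : ℕ) : ℝ :=
  ∏ i ∈ Finset.Icc 1 h, (δ + i - 1) / (i - δ)

lemma two_mul_sin_half_pos {x : ℝ} (h0 : 0 < x) (h2π : x < 2 * π) : 0 < 2 * sin (x / 2) := by
  have := sin_pos_of_pos_of_lt_pi (x := x / 2) (by linarith) (by linarith)
  linarith

lemma continuousOn_fracDiffWeight (δ : ℝ) : ContinuousOn (fracDiffWeight δ) (Ioc 0 π) :=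
  (continuous_const.mul (continuous_sin.comp (continuous_id.div_const 2))).continuousOn.rpow_const
    fun _ hx => Or.inl (two_mul_sin_half_pos hx.1 (by linarith [hx.2, pi_pos])).ne'

lemma fracDiffWeight_le {δ x : ℝ} (hx : x ∈ Ioc 0 π) :
    fracDiffWeight δ x ≤ (1 + (2 / π) ^ (-(2 * δ))) * x ^ (-(2 * δ)) := by
  have hpos := two_mul_sin_half_pos hx.1 (by linarith [hx.2, pi_pos])
  have hx0 : 0 < x := hx.1
  rcases le_or_gt δ 0 with hδ | hδ
  · have hle : fracDiffWeight δ x ≤ x ^ (-(2 * δ)) :=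
      rpow_le_rpow hpos.le (by linarith [sin_le (show 0 ≤ x / 2 by linarith)]) (by linarith)
    nlinarith [rpow_nonneg (show (0:ℝ) ≤ 2 / π by positivity) (-(2 * δ)),
      rpow_nonneg hx0.le (-(2 * δ))]
  · have hjordan : 2 / π * x ≤ 2 * sin (x / 2) := by
      linarith [mul_le_sin (x := x / 2) (by linarith) (by linarith [hx.2])]
    have hle : fracDiffWeight δ x ≤ (2 / π) ^ (-(2 * δ)) * x ^ (-(2 * δ)) := by
      rw [← mul_rpow (by positivity) hx0.le]
      exact rpow_le_rpow_of_nonpos (by positivity) hjordan (by linarith)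
    nlinarith [rpow_nonneg hx0.le (-(2 * δ))]

lemma intervalIntegrable_fracDiffWeight {δ : ℝ} (hδ : δ < 1 / 2) :
    IntervalIntegrable (fracDiffWeight δ) volume 0 π := by
  have hdom :
      IntervalIntegrable (fun x => (1 + (2 / π) ^ (-(2 * δ))) * x ^ (-(2 * δ))) volume 0 π :=
    (intervalIntegral.intervalIntegrable_rpow' (by linarith)).const_mul _
  rw [intervalIntegrable_iff_integrableOn_Ioc_of_le pi_pos.le] at hdom ⊢
  refine hdom.mono' ((continuousOn_fracDiffWeight δ).aestronglyMeasurable measurableSet_Ioc) ?_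
  filter_upwards [ae_restrict_mem measurableSet_Ioc] with x hx
  have hnonneg : 0 ≤ fracDiffWeight δ x :=
    rpow_nonneg (two_mul_sin_half_pos hx.1 (by linarith [hx.2, pi_pos])).le _
  rw [norm_of_nonneg hnonneg]
  exact fracDiffWeight_le hx

lemma intervalIntegrable_cos_mul_fracDiffWeight {δ : ℝ} (hδ : δ < 1 / 2) (b : ℝ) :
    IntervalIntegrable (fun x => cos (b * x) * fracDiffWeight δ x) volume 0 π := by
  refine (intervalIntegrable_fracDiffWeight hδ).mono_fun ?_ (.of_forall fun x => ?_)
  · rw [uIoc_of_le pi_pos.le]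
    exact ((continuous_cos.comp (continuous_const.mul continuous_id)).continuousOn.mul
      (continuousOn_fracDiffWeight δ)).aestronglyMeasurable measurableSet_Ioc
  · simp only [norm_mul]
    exact mul_le_of_le_one_left (norm_nonneg _) (abs_cos_le_one _)

lemma integral_rpow_mul_one_sub_rpow {a b : ℝ} (ha : 0 < a) (hb : 0 < b) :
    ∫ t in (0:ℝ)..1, t ^ (a - 1) * (1 - t) ^ (b - 1) = Gamma a * Gamma b / Gamma (a + b) := by
  have hbeta := Complex.betaIntegral_eq_Gamma_mul_div (a : ℂ) b (by simpa) (by simpa)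
  rw [Complex.betaIntegral, ← Complex.ofReal_add] at hbeta
  simp only [Complex.Gamma_ofReal] at hbeta
  have hreal : ∫ t in (0:ℝ)..1, (t : ℂ) ^ ((a : ℂ) - 1) * (1 - (t : ℂ)) ^ ((b : ℂ) - 1)
      = ((∫ t in (0:ℝ)..1, t ^ (a - 1) * (1 - t) ^ (b - 1) : ℝ) : ℂ) := by
    rw [← intervalIntegral.integral_ofReal]
    refine intervalIntegral.integral_congr fun t ht => ?_
    rw [uIcc_of_le zero_le_one] at ht
    simp only [Complex.ofReal_mul, Complex.ofReal_cpow ht.1,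
      Complex.ofReal_cpow (sub_nonneg.2 ht.2)]
    push_cast
    rfl
  rw [hreal] at hbeta
  exact_mod_cast hbeta

lemma Gamma_half_sub_mul_Gamma_one_sub (δ : ℝ) :
    Gamma (1 / 2 - δ) * Gamma (1 - δ) = Gamma (1 - 2 * δ) * 2 ^ (2 * δ) * √π := by
  have h := Gamma_mul_Gamma_add_half (1 / 2 - δ)
  rwa [show 1 / 2 - δ + 1 / 2 = 1 - δ by ring, show 2 * (1 / 2 - δ) = 1 - 2 * δ by ring,
    show 1 - (1 - 2 * δ) = 2 * δ by ring] at h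

lemma monotoneOn_sin_half_sq : MonotoneOn (fun x => sin (x / 2) ^ 2) (Icc 0 π) := by
  intro x hx y hy hxy
  have hsx : 0 ≤ sin (x / 2) :=
    sin_nonneg_of_nonneg_of_le_pi (by linarith [hx.1]) (by linarith [hx.2, pi_pos])
  exact pow_le_pow_left₀ hsx (sin_le_sin_of_le_of_le_pi_div_two (by linarith [hx.1, pi_pos])
    (by linarith [hy.2]) (by linarith)) 2

lemma image_sin_half_sq_Icc : (fun x => sin (x / 2) ^ 2) '' Icc 0 π = Icc 0 1 := by
  have hcont : Continuous fun x => sin (x / 2) ^ 2 := by fun_prop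
  rw [hcont.continuousOn.image_Icc_of_monotoneOn pi_pos.le monotoneOn_sin_half_sq]
  simp

lemma sin_half_mul_cos_half_mul_beta_integrand {δ x : ℝ} (hx : x ∈ Ioo 0 π) :
    sin (x / 2) * cos (x / 2) *
        (2 ^ (-(2 * δ)) *
          ((sin (x / 2) ^ 2) ^ (1 / 2 - δ - 1) * (1 - sin (x / 2) ^ 2) ^ (1 / 2 - 1 : ℝ)))
      = fracDiffWeight δ x := by
  have hs : 0 < sin (x / 2) :=
    sin_pos_of_pos_of_lt_pi (by linarith [hx.1]) (by linarith [hx.2, pi_pos])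
  have hc : 0 < cos (x / 2) :=
    cos_pos_of_mem_Ioo ⟨by linarith [hx.1, pi_pos], by linarith [hx.2]⟩
  rw [← cos_sq', ← rpow_natCast, ← rpow_natCast, ← rpow_mul hs.le, ← rpow_mul hc.le,
    fracDiffWeight, mul_rpow zero_le_two hs.le]
  push_cast
  rw [show (2:ℝ) * (1 / 2 - δ - 1) = -(2 * δ) - 1 by ring,
    show (2:ℝ) * (1 / 2 - 1) = -1 by ring, rpow_sub_one hs.ne', rpow_neg_one]
  field_simp

lemma integral_fracDiffWeight_eq_beta (δ : ℝ) :
    ∫ x in (0:ℝ)..π, fracDiffWeight δ x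
      = 2 ^ (-(2 * δ)) *
          ∫ t in (0:ℝ)..1, t ^ (1 / 2 - δ - 1) * (1 - t) ^ (1 / 2 - 1 : ℝ) := by
  have hderiv : ∀ x ∈ Icc 0 π,
      HasDerivWithinAt (fun x => sin (x / 2) ^ 2) (sin (x / 2) * cos (x / 2)) (Icc 0 π) x := by
    intro x _
    have h : HasDerivAt (fun y => sin (y / 2)) (cos (x / 2) * (1 / 2)) x :=
      ((hasDerivAt_id x).div_const 2).sin
    exact ((h.fun_pow 2).hasDerivWithinAt).congr_deriv (by push_cast; ring)
  have hcov := integral_image_eq_integral_deriv_smul_of_monotoneOn measurableSet_Icc hderiv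
    monotoneOn_sin_half_sq
    fun t => 2 ^ (-(2 * δ)) * (t ^ (1 / 2 - δ - 1) * (1 - t) ^ (1 / 2 - 1 : ℝ))
  simp only [smul_eq_mul] at hcov
  rw [image_sin_half_sq_Icc, integral_Icc_eq_integral_Ioo, integral_Icc_eq_integral_Ioo,
    setIntegral_congr_fun measurableSet_Ioo
      fun x hx => sin_half_mul_cos_half_mul_beta_integrand hx] at hcov
  rw [intervalIntegral.integral_of_le pi_pos.le, intervalIntegral.integral_of_le zero_le_one,
    integral_Ioc_eq_integral_Ioo, integral_Ioc_eq_integral_Ioo, ← hcov, integral_const_mul]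

lemma integral_fracDiffWeight {δ : ℝ} (hδ : δ < 1 / 2) :
    ∫ x in (0:ℝ)..π, fracDiffWeight δ x = π * (Gamma (1 - 2 * δ) / Gamma (1 - δ) ^ 2) := by
  rw [integral_fracDiffWeight_eq_beta, integral_rpow_mul_one_sub_rpow (by linarith) (by norm_num),
    show 1 / 2 - δ + 1 / 2 = 1 - δ by ring, Gamma_one_half_eq]
  have hG : 0 < Gamma (1 - δ) := Gamma_pos_of_pos (by linarith)
  have htwo : (2:ℝ) ^ (-(2 * δ)) * 2 ^ (2 * δ) = 1 := by rw [← rpow_add two_pos]; simp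
  have hdup := Gamma_half_sub_mul_Gamma_one_sub δ
  generalize Gamma (1 / 2 - δ) = A at hdup ⊢
  field_simp
  linear_combination √π * 2 ^ (-(2 * δ)) * hdup
    + Gamma (1 - 2 * δ) * √π ^ 2 * htwo + Gamma (1 - 2 * δ) * sq_sqrt pi_pos.le

lemma hasDerivAt_two_mul_sin_half_rpow_mul_cos (δ a : ℝ) {x : ℝ} (hx : 0 < sin (x / 2)) :
    HasDerivAt (fun y => (2 * sin (y / 2)) ^ (1 - 2 * δ) * cos ((a + 1 / 2) * y))
      ((a + 1 - δ) * (cos ((a + 1) * x) * fracDiffWeight δ x)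
        - (a + δ) * (cos (a * x) * fracDiffWeight δ x)) x := by
  have hpos : 0 < 2 * sin (x / 2) := by linarith
  have hbase : HasDerivAt (fun y => 2 * sin (y / 2)) (cos (x / 2)) x :=
    ((((hasDerivAt_id' x).div_const 2).sin).const_mul 2).congr_deriv (by ring)
  have hprod := (hbase.rpow_const (p := 1 - 2 * δ) (Or.inl hpos.ne')).mul
    (((hasDerivAt_id' x).const_mul (a + 1 / 2)).cos)
  refine hprod.congr_deriv ?_
  have hsplit : (2 * sin (x / 2)) ^ (1 - 2 * δ) = 2 * sin (x / 2) * fracDiffWeight δ x := by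
    rw [fracDiffWeight, show 1 - 2 * δ = 1 + -(2 * δ) by ring, rpow_add hpos, rpow_one]
  rw [hsplit, show 1 - 2 * δ - 1 = -(2 * δ) by ring, ← fracDiffWeight,
    show (a + 1) * x = (a + 1 / 2) * x + x / 2 by ring,
    show a * x = (a + 1 / 2) * x - x / 2 by ring, cos_add, cos_sub]
  ring

lemma integral_cos_succ_mul_fracDiffWeight {δ : ℝ} (hδ : δ < 1 / 2) (h : ℕ) :
    (h + 1 - δ) * ∫ x in (0:ℝ)..π, cos ((h + 1) * x) * fracDiffWeight δ x
      = (h + δ) * ∫ x in (0:ℝ)..π, cos (h * x) * fracDiffWeight δ x := by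
  set G : ℝ → ℝ := fun y => (2 * sin (y / 2)) ^ (1 - 2 * δ) * cos ((h + 1 / 2) * y)
  have hcont : ContinuousOn G (Icc 0 π) := by
    refine (Continuous.mul ?_ (by fun_prop)).continuousOn
    exact (continuous_const.mul (continuous_sin.comp (continuous_id.div_const 2))).rpow_const
      fun _ => Or.inr (by linarith)
  have hderiv : ∀ x ∈ Ioo 0 π, HasDerivAt G _ x := fun x hx =>
    hasDerivAt_two_mul_sin_half_rpow_mul_cos δ h
      (sin_pos_of_pos_of_lt_pi (by linarith [hx.1]) (by linarith [hx.2, pi_pos]))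
  have hG0 : G 0 = 0 := by simp [G, zero_rpow (show 1 - 2 * δ ≠ 0 by linarith)]
  have hGπ : G π = 0 := by
    have : cos ((h + 1 / 2) * π) = 0 := by
      rw [show (h + 1 / 2) * π = h * π + π / 2 by ring, cos_add, cos_pi_div_two, sin_pi_div_two,
        sin_nat_mul_pi]
      ring
    simp only [G, this, mul_zero]
  have hint₁ := (intervalIntegrable_cos_mul_fracDiffWeight hδ (h + 1)).const_mul (h + 1 - δ)
  have hint₀ := (intervalIntegrable_cos_mul_fracDiffWeight hδ h).const_mul (h + δ)
  have hftc := intervalIntegral.integral_eq_sub_of_hasDerivAt_of_le pi_pos.le hcont hderiv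
    (hint₁.sub hint₀)
  rw [hG0, hGπ, intervalIntegral.integral_sub hint₁ hint₀, intervalIntegral.integral_const_mul,
    intervalIntegral.integral_const_mul] at hftc
  linarith

lemma integral_cos_nat_mul_mul_fracDiffWeight {δ : ℝ} (hδ : δ < 1 / 2) (h : ℕ) :
    ∫ x in (0:ℝ)..π, cos (h * x) * fracDiffWeight δ x
      = (∫ x in (0:ℝ)..π, fracDiffWeight δ x) * fracDiffAutocorr δ h := by
  induction h with
  | zero => simp [fracDiffAutocorr]
  | succ h ih =>
    have hne : (h + 1 - δ : ℝ) ≠ 0 := by linarith [(Nat.cast_nonneg h : (0:ℝ) ≤ h)]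
    have hrec := integral_cos_succ_mul_fracDiffWeight hδ h
    rw [ih] at hrec
    rw [fracDiffAutocorr, Finset.prod_Icc_succ_top (Nat.le_add_left 1 h), ← fracDiffAutocorr]
    push_cast
    rw [← mul_right_inj' hne, hrec]
    field_simp
    ring

lemma norm_sum_mul_exp_sq (s : Finset ℕ) (c : ℕ → ℝ) (x : ℝ) :
    ‖∑ j ∈ s, (c j : ℂ) * Complex.exp (Complex.I * j * x)‖ ^ 2
      = ∑ j ∈ s, ∑ k ∈ s, c j * c k * cos ((j - k) * x) := by
  rw [Complex.sq_norm, ← Complex.ofReal_re (Complex.normSq _), ← Complex.mul_conj, map_sum,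
    Finset.sum_mul_sum, Complex.re_sum]
  refine Finset.sum_congr rfl fun j _ => ?_
  rw [Complex.re_sum]
  refine Finset.sum_congr rfl fun k _ => ?_
  have hterm : (c j : ℂ) * Complex.exp (Complex.I * j * x)
        * (starRingEnd ℂ) ((c k : ℂ) * Complex.exp (Complex.I * k * x))
      = ((c j * c k : ℝ) : ℂ) * Complex.exp (((j - k) * x : ℝ) * Complex.I) := by
    rw [map_mul, ← Complex.exp_conj, Complex.conj_ofReal, map_mul, map_mul, Complex.conj_I,
      Complex.conj_natCast, Complex.conj_ofReal, mul_mul_mul_comm, ← Complex.exp_add]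
    push_cast
    ring_nf
  rw [hterm, Complex.re_ofReal_mul, Complex.exp_ofReal_mul_I_re]

lemma sum_range_sum_range_eq_of_symm {R : Type*} [CommSemiring R] (N : ℕ) (f : ℕ → ℕ → R)
    (hf : ∀ j k, f j k = f k j) :
    ∑ j ∈ Finset.range N, ∑ k ∈ Finset.range N, f j k
      = ∑ j ∈ Finset.range N, f j j
          + 2 * ∑ j ∈ Finset.range N, ∑ k ∈ Finset.range j, f j k := by
  induction N with
  | zero => simp
  | succ n ih =>
    simp only [Finset.sum_range_succ, Finset.sum_add_distrib, ih]
    rw [Finset.sum_congr rfl fun j _ => hf j n]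
    ring

lemma integral_norm_sum_mul_exp_sq_mul_fracDiffWeight {δ : ℝ} (hδ : δ < 1 / 2) (N : ℕ)
    (c : ℕ → ℝ) :
    ∫ x in (0:ℝ)..π,
        ‖∑ j ∈ Finset.range N, (c j : ℂ) * Complex.exp (Complex.I * j * x)‖ ^ 2
          * fracDiffWeight δ x
      = (∫ x in (0:ℝ)..π, fracDiffWeight δ x) * (∑ j ∈ Finset.range N, c j ^ 2
          + 2 * ∑ j ∈ Finset.range N, ∑ k ∈ Finset.range j,
              c j * c k * fracDiffAutocorr δ (j - k)) := by
  set F : ℕ → ℕ → ℝ := fun j k =>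
    c j * c k * ∫ x in (0:ℝ)..π, cos ((j - k) * x) * fracDiffWeight δ x
  have hF : ∀ j k, F j k = F k j := fun j k => by
    simp only [F, show ∀ x : ℝ, cos ((j - k) * x) = cos ((k - j) * x) from fun x => by
      rw [← cos_neg]; ring_nf]
    ring
  have hdiag : ∀ j, F j j = (∫ x in (0:ℝ)..π, fracDiffWeight δ x) * c j ^ 2 := fun j => by
    simp only [F, sub_self, zero_mul, cos_zero, one_mul]
    ring
  have hoff : ∀ j k, k < j →
      F j k = (∫ x in (0:ℝ)..π, fracDiffWeight δ x)
        * (c j * c k * fracDiffAutocorr δ (j - k)) := by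
    intro j k hkj
    simp only [F]
    rw [← Nat.cast_sub hkj.le, integral_cos_nat_mul_mul_fracDiffWeight hδ]
    ring
  have hint : ∀ j k : ℕ, IntervalIntegrable
      (fun x => c j * (c k * (cos ((j - k) * x) * fracDiffWeight δ x))) volume 0 π :=
    fun j k => ((intervalIntegrable_cos_mul_fracDiffWeight hδ _).const_mul _).const_mul _
  calc _ = ∑ j ∈ Finset.range N, ∑ k ∈ Finset.range N, F j k := by
        simp_rw [norm_sum_mul_exp_sq, Finset.sum_mul, mul_assoc]
        rw [intervalIntegral.integral_finsetSum fun j _ => by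
          simpa only [Finset.sum_fn] using IntervalIntegrable.sum _ fun k _ => hint j k]
        refine Finset.sum_congr rfl fun j _ => ?_
        rw [intervalIntegral.integral_finsetSum fun k _ => hint j k]
        simp only [F, intervalIntegral.integral_const_mul, mul_assoc]
    _ = _ := by
        rw [sum_range_sum_range_eq_of_symm N F hF, Finset.sum_congr rfl fun j _ => hdiag j,
          Finset.sum_congr rfl fun j _ => Finset.sum_congr rfl fun k hk =>
            hoff j k (Finset.mem_range.1 hk)]
        simp only [← Finset.mul_sum]
        ring

theorem exact_K_ma_mis_specified_as_ar_general (p q0 : ℕ) (θ φ : ℕ → ℝ) (δ σ0 σ : ℝ)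
    (hδ : |δ| < 1/2) :
    (σ0 / σ) * ∫ x in (0:ℝ)..π,
        (‖∑ j ∈ Finset.range (q0 + p + 1),
            ((∑ r ∈ Finset.range (j + 1), θ (j - r) * φ r : ℝ) : ℂ) *
              Complex.exp (Complex.I * (j : ℂ) * (x : ℂ))‖)^2 *
          (2 * Real.sin (x / 2)) ^ (-(2 * δ))
      = π * (σ0 / σ) * (Real.Gamma (1 - 2 * δ) / (Real.Gamma (1 - δ))^2) *
          ((∑ j ∈ Finset.range (q0 + p + 1),
              (∑ r ∈ Finset.range (j + 1), θ (j - r) * φ r)^2)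
            + 2 * ∑ j ∈ Finset.range (q0 + p + 1), ∑ k ∈ Finset.range j,
                (∑ r ∈ Finset.range (j + 1), θ (j - r) * φ r) *
                (∑ r ∈ Finset.range (k + 1), θ (k - r) * φ r) *
                ∏ i ∈ Finset.Icc 1 (j - k), ((δ + (i : ℝ) - 1) / ((i : ℝ) - δ))) := by
  have hδ' : δ < 1 / 2 := (abs_lt.1 hδ).2
  have hK := integral_norm_sum_mul_exp_sq_mul_fracDiffWeight hδ' (q0 + p + 1)
    fun j => ∑ r ∈ Finset.range (j + 1), θ (j - r) * φ r
  rw [integral_fracDiffWeight hδ'] at hK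
  simp only [fracDiffWeight, fracDiffAutocorr] at hK
  rw [hK]
  ring

theorem exact_K_ma_mis_specified_as_ar (p q0 : ℕ) (θ φ : ℕ → ℝ) (δ σ0 σ : ℝ)
    (hθ0 : θ 0 = 1) (hφ0 : φ 0 = 1)
    (hθz : ∀ s : ℕ, q0 < s → θ s = 0) (hφz : ∀ r : ℕ, p < r → φ r = 0)
    (hθroots : ∀ z : ℂ, ‖z‖ ≤ 1 →
      (∑ s ∈ Finset.range (q0 + 1), (θ s : ℂ) * z ^ s) ≠ 0)
    (hφroots : ∀ z : ℂ, ‖z‖ ≤ 1 →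
      (∑ r ∈ Finset.range (p + 1), (φ r : ℂ) * z ^ r) ≠ 0)
    (hδ : |δ| < 1/2) (hσ0 : 0 < σ0) (hσ : 0 < σ) :
    (σ0 / σ) * ∫ x in (0:ℝ)..π,
        (‖∑ j ∈ Finset.range (q0 + p + 1),
            ((∑ r ∈ Finset.range (j + 1), θ (j - r) * φ r : ℝ) : ℂ) *
              Complex.exp (Complex.I * (j : ℂ) * (x : ℂ))‖)^2 *
          (2 * Real.sin (x / 2)) ^ (-(2 * δ))
      = π * (σ0 / σ) * (Real.Gamma (1 - 2 * δ) / (Real.Gamma (1 - δ))^2) *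
          ((∑ j ∈ Finset.range (q0 + p + 1),
              (∑ r ∈ Finset.range (j + 1), θ (j - r) * φ r)^2)
            + 2 * ∑ j ∈ Finset.range (q0 + p + 1), ∑ k ∈ Finset.range j,
                (∑ r ∈ Finset.range (j + 1), θ (j - r) * φ r) *
                (∑ r ∈ Finset.range (k + 1), θ (k - r) * φ r) *
                ∏ i ∈ Finset.Icc 1 (j - k), ((δ + (i : ℝ) - 1) / ((i : ℝ) - δ))) :=
  exact_K_ma_mis_specified_as_ar_general p q0 θ φ δ σ0 σ hδ
end
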